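/- Let $U, \Sigma, H$ be real Hilbert spaces, $L_1, L_2 : U \times \Sigma \to H$ linear maps and $K : U \to H$ a map. Assume: (a) $C_1\|u\|_U^2 + C_2\|\sigma\|_\Sigma^2 \le \|L_1(u,\sigma)\|^2 + \|L_2(u,\sigma)\|^2$ for all $(u,\sigma)$ with $C_1, C_2 > 0$; (b) $\|K(u)-K(v)\|^2 \le L\|u-v\|_U^2$ for $u,v$ in a set $S \subseteq U$ with $0 < L < C_1$. Let $(u,\sigma)$ satisfy $L_1(u,\sigma) + f = 0$ and $L_2(u,\sigma) + K(u) + g = 0$. Then for any $C$ with $L/C_1 < C < 1$ and all $(v,\tau) \in S \times \Sigma$: $\|L_1(v,\tau)+f\|^2 + \|L_2(v,\tau)+K(v)+g\|^2 \ge \min\{C_1(1-C) - L(C^{-1}-1),\ C_2(1-C)\}\,(\|u-v\|_U^2 + \|\sigma-\tau\|_\Sigma^2)$. -/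

import Mathlib

/-!
By linearity and the exact equations, the residuals at `(v, τ)` are `-L₁ w` and
`-(L₂ w + (K u - K v))` for the error `w = (u - v, σ - τ)`. Splitting off the nonlinear
perturbation with a weighted Young inequality (weight `C`) costs a factor `1 - C` on the
coercivity bound and `C⁻¹ - 1` on `‖K u - K v‖² ≤ L ‖u - v‖²`.
-/

/-- Weighted AM-GM, `2‖x‖‖y‖ ≤ C‖x‖² + C⁻¹‖y‖²`, applied to `‖x + y‖ ≥ |‖x‖ - ‖y‖|`. -/
lemma sq_norm_add_ge {E : Type*} [SeminormedAddCommGroup E] (x y : E) {C : ℝ} (hC : 0 < C) :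
    (1 - C) * ‖x‖ ^ 2 - (C⁻¹ - 1) * ‖y‖ ^ 2 ≤ ‖x + y‖ ^ 2 := by
  have hrev : (‖x‖ - ‖y‖) ^ 2 ≤ ‖x + y‖ ^ 2 := by
    simpa [sub_neg_eq_add, norm_neg] using sq_le_sq' (abs_le.mp (abs_norm_sub_norm_le x (-y))).1
      (abs_le.mp (abs_norm_sub_norm_le x (-y))).2
  have hamgm : 2 * (‖x‖ * ‖y‖) ≤ C * ‖x‖ ^ 2 + C⁻¹ * ‖y‖ ^ 2 := by
    have hCC : C * C⁻¹ = 1 := mul_inv_cancel₀ hC.ne'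
    nlinarith [mul_nonneg (inv_pos.mpr hC).le (sq_nonneg (C * ‖x‖ - ‖y‖))]
  nlinarith

lemma min_mul_add_le_add_mul {a b x y : ℝ} (hx : 0 ≤ x) (hy : 0 ≤ y) :
    min a b * (x + y) ≤ a * x + b * y := by
  rw [mul_add]
  exact add_le_add (mul_le_mul_of_nonneg_right (min_le_left a b) hx)
    (mul_le_mul_of_nonneg_right (min_le_right a b) hy)

lemma add_sq_norm_ge_of_coercive {E F G : Type*} [SeminormedAddCommGroup E]
    [SeminormedAddCommGroup F] [SeminormedAddCommGroup G] {C1 C2 L C : ℝ} {e : E} {ε : F}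
    {a b k : G} (hcoer : C1 * ‖e‖ ^ 2 + C2 * ‖ε‖ ^ 2 ≤ ‖a‖ ^ 2 + ‖b‖ ^ 2)
    (hk : ‖k‖ ^ 2 ≤ L * ‖e‖ ^ 2) (hC : 0 < C) (hC1 : C ≤ 1) :
    (C1 * (1 - C) - L * (C⁻¹ - 1)) * ‖e‖ ^ 2 + C2 * (1 - C) * ‖ε‖ ^ 2
      ≤ ‖a‖ ^ 2 + ‖b + k‖ ^ 2 := by
  have hinv : 0 ≤ C⁻¹ - 1 := sub_nonneg.mpr (one_le_inv₀ hC |>.mpr hC1)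
  calc (C1 * (1 - C) - L * (C⁻¹ - 1)) * ‖e‖ ^ 2 + C2 * (1 - C) * ‖ε‖ ^ 2
      = (1 - C) * (C1 * ‖e‖ ^ 2 + C2 * ‖ε‖ ^ 2) - (C⁻¹ - 1) * (L * ‖e‖ ^ 2) := by ring
    _ ≤ (1 - C) * (‖a‖ ^ 2 + ‖b‖ ^ 2) - (C⁻¹ - 1) * ‖k‖ ^ 2 := by gcongr
    _ ≤ ‖a‖ ^ 2 + ((1 - C) * ‖b‖ ^ 2 - (C⁻¹ - 1) * ‖k‖ ^ 2) := by nlinarith [sq_nonneg ‖a‖]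
    _ ≤ ‖a‖ ^ 2 + ‖b + k‖ ^ 2 := by grw [sq_norm_add_ge b k hC]

lemma map_add_eq_neg_map_sub {M N F : Type*} [AddCommGroup M] [AddCommGroup N] [FunLike F M N]
    [AddMonoidHomClass F M N] (φ : F) {x : M} {a : N} (h : φ x + a = 0) (y : M) :
    φ y + a = -φ (x - y) := by
  rw [map_sub, eq_neg_of_add_eq_zero_right h]
  abel

theorem stmt7_general {U Sig H : Type*} [NormedAddCommGroup U] [InnerProductSpace ℝ U]
    [NormedAddCommGroup Sig] [InnerProductSpace ℝ Sig]
    [NormedAddCommGroup H] [InnerProductSpace ℝ H]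
    (L1 L2 : U × Sig →ₗ[ℝ] H) (K : U → H) (S : Set U)
    (C1 C2 L : ℝ) (hC1 : 0 < C1) (hL : 0 < L)
    (hco : ∀ (u : U) (σ : Sig),
      C1*‖u‖^2 + C2*‖σ‖^2 ≤ ‖L1 (u,σ)‖^2 + ‖L2 (u,σ)‖^2)
    (hlip : ∀ x ∈ S, ∀ y ∈ S, ‖K x - K y‖^2 ≤ L*‖x-y‖^2)
    (f g : H) (u : U) (σ : Sig) (hu : u ∈ S)
    (h1 : L1 (u,σ) + f = 0) (h2 : L2 (u,σ) + K u + g = 0)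
    (C : ℝ) (hCl : L/C1 < C) (hCu : C < 1) :
    ∀ v ∈ S, ∀ τ : Sig,
      min (C1*(1-C) - L*(C⁻¹-1)) (C2*(1-C)) * (‖u-v‖^2 + ‖σ-τ‖^2)
        ≤ ‖L1 (v,τ) + f‖^2 + ‖L2 (v,τ) + K v + g‖^2 := by
  intro v hv τ
  have hC : 0 < C := (div_pos hL hC1).trans hCl
  have e1 : L1 (v,τ) + f = -L1 (u - v, σ - τ) := map_add_eq_neg_map_sub L1 h1 (v, τ)
  have e2 : L2 (v,τ) + K v + g = -(L2 (u - v, σ - τ) + (K u - K v)) := by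
    rw [add_assoc] at h2
    calc L2 (v,τ) + K v + g = L2 (v,τ) + (K u + g) - (K u - K v) := by abel
      _ = _ := by rw [map_add_eq_neg_map_sub L2 h2 (v, τ), neg_add']; rfl
  rw [e1, e2, norm_neg, norm_neg]
  calc _ ≤ (C1*(1-C) - L*(C⁻¹-1)) * ‖u-v‖^2 + C2*(1-C) * ‖σ-τ‖^2 :=
        min_mul_add_le_add_mul (sq_nonneg _) (sq_nonneg _)
    _ ≤ _ := add_sq_norm_ge_of_coercive (hco _ _) (hlip u hu v hv) hC hCu.le

theorem stmt7 {U Sig H : Type*} [NormedAddCommGroup U] [InnerProductSpace ℝ U]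
    [NormedAddCommGroup Sig] [InnerProductSpace ℝ Sig]
    [NormedAddCommGroup H] [InnerProductSpace ℝ H]
    (L1 L2 : U × Sig →ₗ[ℝ] H) (K : U → H) (S : Set U)
    (C1 C2 L : ℝ) (hC1 : 0 < C1) (hC2 : 0 < C2) (hL : 0 < L) (hLC : L < C1)
    (hco : ∀ (u : U) (σ : Sig),
      C1*‖u‖^2 + C2*‖σ‖^2 ≤ ‖L1 (u,σ)‖^2 + ‖L2 (u,σ)‖^2)
    (hlip : ∀ x ∈ S, ∀ y ∈ S, ‖K x - K y‖^2 ≤ L*‖x-y‖^2)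
    (f g : H) (u : U) (σ : Sig) (hu : u ∈ S)
    (h1 : L1 (u,σ) + f = 0) (h2 : L2 (u,σ) + K u + g = 0)
    (C : ℝ) (hCl : L/C1 < C) (hCu : C < 1) :
    ∀ v ∈ S, ∀ τ : Sig,
      min (C1*(1-C) - L*(C⁻¹-1)) (C2*(1-C)) * (‖u-v‖^2 + ‖σ-τ‖^2)
        ≤ ‖L1 (v,τ) + f‖^2 + ‖L2 (v,τ) + K v + g‖^2 :=
  stmt7_general L1 L2 K S C1 C2 L hC1 hL hco hlip f g u σ hu h1 h2 C hCl hCu
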